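/- arXiv:2108.08225 — 3 statements merged into one kernel-verified Lean document; each statement's English description precedes it below -/
import Mathlib

section
/- Let N ≥ 1 and for each k ∈ {1,…,N} let α_k ≥ 0 (volume fraction), T_k > 0 (phase temperature), μ_k > 0 (shear viscosity), μ_{b,k} ≥ 0 (bulk viscosity), λ_k ≥ 0 (heat conductivity), I_k ≥ 0 (external energy intensity), and g_k ∈ ℝ³ (temperature gradient ∇T_k). Let D be a symmetric 3×3 real matrix (the rate-of-deformation tensor) and let ς_{jk} = ς_{kj} ≥ 0 for all j ≠ k (temperature relaxation rates). Then the entropy production ∑_{k=1}^N (1/T_k)·[ α_k·(2 μ_k ∑_{i,j} D_{ij}² + (μ_{b,k} − (2/3) μ_k)·(tr D)²) + ∑_{j≠k} ς_{jk} (T_j − T_k) + α_k I_k ] + ∑_{k=1}^N α_k λ_k ‖g_k‖² / T_k² is nonnegative. -/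
open Finset

/-- Entropy production of the reduced multicomponent model is nonnegative
(pointwise algebraic form of the paper's Proposition in Section 2.5). -/
theorem entropy_production_nonneg (N : ℕ) (hN : 1 ≤ N)
    (α T μ μb lam I : Fin N → ℝ) (g : Fin N → Fin 3 → ℝ)
    (D : Matrix (Fin 3) (Fin 3) ℝ) (hD : D.IsSymm)
    (ς : Fin N → Fin N → ℝ)
    (hα : ∀ k, 0 ≤ α k) (hT : ∀ k, 0 < T k) (hμ : ∀ k, 0 < μ k)
    (hμb : ∀ k, 0 ≤ μb k) (hlam : ∀ k, 0 ≤ lam k) (hI : ∀ k, 0 ≤ I k)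
    (hς_symm : ∀ j k, j ≠ k → ς j k = ς k j)
    (hς_nonneg : ∀ j k, j ≠ k → 0 ≤ ς j k) :
    0 ≤ (∑ k, (1 / T k) *
          (α k * (2 * μ k * (∑ i, ∑ j, (D i j) ^ 2)
              + (μb k - (2 / 3) * μ k) * (Matrix.trace D) ^ 2)
            + (∑ j ∈ Finset.univ.erase k, ς j k * (T j - T k))
            + α k * I k))
        + ∑ k, α k * lam k * (∑ i, (g k i) ^ 2) / (T k) ^ 2 := by
  -- split the main sum into viscous/source part and relaxation part
  have hsplit : ∀ k : Fin N, (1 / T k) *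
          (α k * (2 * μ k * (∑ i, ∑ j, (D i j) ^ 2)
              + (μb k - (2 / 3) * μ k) * (Matrix.trace D) ^ 2)
            + (∑ j ∈ Finset.univ.erase k, ς j k * (T j - T k))
            + α k * I k)
      = (1 / T k) * (α k * (2 * μ k * (∑ i, ∑ j, (D i j) ^ 2)
              + (μb k - (2 / 3) * μ k) * (Matrix.trace D) ^ 2)
            + α k * I k)
        + ∑ j ∈ Finset.univ.erase k, (1 / T k) * (ς j k * (T j - T k)) := by
    intro k
    rw [← Finset.mul_sum]
    ring
  rw [Finset.sum_congr rfl (fun k _ => hsplit k), Finset.sum_add_distrib]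
  have hvisc : 0 ≤ ∑ k, ((1 / T k) * (α k * (2 * μ k * (∑ i, ∑ j, (D i j) ^ 2)
              + (μb k - (2 / 3) * μ k) * (Matrix.trace D) ^ 2)
            + α k * I k)) := by
    apply Finset.sum_nonneg
    intro k _
    have hTk := hT k
    have h1 : 0 ≤ 2 * μ k * (∑ i, ∑ j, (D i j) ^ 2)
        + (μb k - (2 / 3) * μ k) * (Matrix.trace D) ^ 2 := by
      have htr : (Matrix.trace D) ^ 2 ≤ 3 * (∑ i, ∑ j, (D i j) ^ 2) := by
        simp only [Matrix.trace, Matrix.diag, Fin.sum_univ_three]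
        nlinarith [sq_nonneg (D 0 0 - D 1 1), sq_nonneg (D 0 0 - D 2 2),
          sq_nonneg (D 1 1 - D 2 2), sq_nonneg (D 0 1), sq_nonneg (D 0 2),
          sq_nonneg (D 1 0), sq_nonneg (D 1 2), sq_nonneg (D 2 0), sq_nonneg (D 2 1)]
      nlinarith [mul_nonneg (hμb k) (sq_nonneg (Matrix.trace D)), (hμ k).le,
        mul_le_mul_of_nonneg_left htr
          (le_of_lt (mul_pos (by norm_num) (hμ k) : (0:ℝ) < (2/3) * μ k))]
    have h2 : 0 ≤ α k * I k := mul_nonneg (hα k) (hI k)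
    have h3 : 0 ≤ (1 : ℝ) / T k := by positivity
    exact mul_nonneg h3 (add_nonneg (mul_nonneg (hα k) h1) h2)
  have hheat : 0 ≤ ∑ k, α k * lam k * (∑ i, (g k i) ^ 2) / (T k) ^ 2 := by
    apply Finset.sum_nonneg
    intro k _
    have : 0 ≤ ∑ i, (g k i) ^ 2 := Finset.sum_nonneg fun i _ => sq_nonneg _
    have := hα k; have := hlam k; have := hT k
    positivity
  -- relaxation part
  set F : Fin N → Fin N → ℝ := fun k j =>
    if j = k then 0 else (1 / T k) * (ς j k * (T j - T k)) with hF
  have hrelax : 0 ≤ ∑ k, ∑ j ∈ Finset.univ.erase k, (1 / T k) * (ς j k * (T j - T k)) := by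
    have heq : ∀ k : Fin N, ∑ j ∈ Finset.univ.erase k, (1 / T k) * (ς j k * (T j - T k))
        = ∑ j, F k j := by
      intro k
      rw [← Finset.add_sum_erase _ (F k) (Finset.mem_univ k)]
      simp only [hF, if_pos rfl, zero_add]
      refine Finset.sum_congr rfl fun j hj => ?_
      rw [if_neg (Finset.ne_of_mem_erase hj)]
    simp only [heq]
    have hpair : ∀ k j : Fin N, 0 ≤ F k j + F j k := by
      intro k j
      by_cases hjk : j = k
      · subst hjk; simp [hF]
      · have hkj : k ≠ j := fun h => hjk h.symm
        have hval : F k j + F j k = ς j k * (T j - T k) ^ 2 / (T j * T k) := by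
          simp only [hF, if_neg hjk, if_neg hkj]
          rw [hς_symm k j hkj]
          have h1 := (hT j).ne'
          have h2 := (hT k).ne'
          field_simp
          ring
        rw [hval]
        have := hς_nonneg j k hjk
        have := hT j
        have := hT k
        positivity
    have h2 : 0 ≤ ∑ k, ∑ j, (F k j + F j k) :=
      Finset.sum_nonneg fun k _ => Finset.sum_nonneg fun j _ => hpair k j
    have hcomm : ∑ k, ∑ j, F j k = ∑ k, ∑ j, F k j := Finset.sum_comm
    simp only [Finset.sum_add_distrib] at h2
    rw [hcomm] at h2
    linarith
  linarith
end

section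
/- Let N ≥ 1 and for k ∈ {1,…,N} let α_k > 0 with ∑_{k=1}^N α_k = 1, let A_k > 0, and let G_k ∈ ℝ and d ∈ ℝ. Define A by 1/A = ∑_{k=1}^N α_k/A_k and F_k = α_k·((A − A_k)/A_k)·d + A·∑_{j≠k} (G_k α_j − G_j α_k)/(A_k A_j). Then for every k, −(A_k/α_k)·F_k + G_k/α_k − A_k·d = A·∑_{j=1}^N G_j/A_j − A·d; in particular the left-hand side takes the same value for all k (the common O(1) pressure derivative Dp/Dt). -/
open Finset

/-- The harmonic-mean acoustic impedance A, defined by 1/A = ∑ α_k/A_k. -/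
noncomputable def Amix {N : ℕ} (α A : Fin N → ℝ) : ℝ := (∑ j, α j / A j)⁻¹

/-- The leading-order volume-fraction exchange term F_k^{sum,(0)}
of equation (2.24). -/
noncomputable def Fk {N : ℕ} (α A G : Fin N → ℝ) (d : ℝ) (k : Fin N) : ℝ :=
  α k * ((Amix α A - A k) / A k) * d
    + Amix α A * ∑ j ∈ Finset.univ.erase k, (G k * α j - G j * α k) / (A k * A j)

/-- With the exchange terms F_k of equation (2.24), the leading-order pressure
derivative −(A_k/α_k)F_k + G_k/α_k − A_k d is the same for all phases, equal
to A ∑_j G_j/A_j − A d. -/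
theorem pressure_derivative_common (N : ℕ) (hN : 1 ≤ N)
    (α A G : Fin N → ℝ) (d : ℝ)
    (hα : ∀ k, 0 < α k) (hsum : ∑ k, α k = 1) (hA : ∀ k, 0 < A k) :
    ∀ k, -(A k / α k) * Fk α A G d k + G k / α k - A k * d
      = Amix α A * (∑ j, G j / A j) - Amix α A * d := by
  intro k
  have hNe : (Finset.univ : Finset (Fin N)).Nonempty := by
    have : Nonempty (Fin N) := ⟨⟨0, hN⟩⟩
    exact univ_nonempty
  have hs : 0 < ∑ j, α j / A j :=
    Finset.sum_pos (fun j _ => div_pos (hα j) (hA j)) hNe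
  have hAk : A k ≠ 0 := (hA k).ne'
  have hαk : α k ≠ 0 := (hα k).ne'
  have hsplit : ∑ j ∈ Finset.univ.erase k, (G k * α j - G j * α k) / (A k * A j)
      = (G k * (∑ j, α j / A j) - (∑ j, G j / A j) * α k) / A k := by
    have herase : ∑ j ∈ Finset.univ.erase k, (G k * α j - G j * α k) / (A k * A j)
        = ∑ j, (G k * α j - G j * α k) / (A k * A j) := by
      rw [Finset.sum_erase]
      simp
    rw [herase]
    have h0 : ∀ j : Fin N, (G k * α j - G j * α k) / (A k * A j)
        = (G k * (α j / A j) - (G j / A j) * α k) / A k := by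
      intro j
      rw [← mul_div_assoc, div_mul_eq_mul_div, div_sub_div_same, div_div,
        mul_comm (A j) (A k)]
    simp_rw [h0, ← Finset.sum_div, Finset.sum_sub_distrib, ← Finset.mul_sum,
      ← Finset.sum_mul]
  unfold Fk Amix
  rw [hsplit]
  field_simp
  ring
end

section
/- Let N ≥ 1 and for k ∈ {1,…,N} let α_k > 0 with ∑_{k=1}^N α_k = 1, let A_k > 0, and let G_k ∈ ℝ and d ∈ ℝ. Suppose F'_1,…,F'_N are real numbers such that ∑_{k=1}^N F'_k = 0 and the quantity −(A_k/α_k)·F'_k + G_k/α_k − A_k·d is the same for all k. Then F'_k = α_k·((A − A_k)/A_k)·d + A·∑_{j≠k} (G_k α_j − G_j α_k)/(A_k A_j) for all k, where A is defined by 1/A = ∑_{k=1}^N α_k/A_k. -/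
open Finset

noncomputable def pressureDeriv {ι : Type*} (α A G : ι → ℝ) (d : ℝ) (F : ι → ℝ) (k : ι) : ℝ :=
  -(A k / α k) * F k + G k / α k - A k * d

section

variable {ι : Type*} {α A G F : ι → ℝ} {d c : ℝ}

theorem eq_of_pressureDeriv_eq {k : ι} (hα : α k ≠ 0) (hA : A k ≠ 0)
    (h : pressureDeriv α A G d F k = c) :
    F k = G k / A k - α k * d - c * (α k / A k) := by
  rw [← h, pressureDeriv]
  field_simp
  ring

theorem sum_div_pos [Fintype ι] [Nonempty ι] (hα : ∀ k, 0 < α k) (hA : ∀ k, 0 < A k) :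
    0 < ∑ j, α j / A j :=
  sum_pos (fun j _ => div_pos (hα j) (hA j)) univ_nonempty

theorem sum_div_sub_eq_of_exchange_eq [Fintype ι] (hsum : ∑ k, α k = 1)
    (hF : ∀ j, F j = G j / A j - α j * d - c * (α j / A j)) (hFsum : ∑ j, F j = 0) :
    ∑ j, G j / A j - d = c * ∑ j, α j / A j := by
  rw [sum_congr rfl fun j _ => hF j, sum_sub_distrib, sum_sub_distrib, ← sum_mul, ← mul_sum,
    hsum, one_mul] at hFsum
  linarith

theorem sum_erase_cross_div [Fintype ι] [DecidableEq ι] (k : ι) :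
    ∑ j ∈ univ.erase k, (G k * α j - G j * α k) / (A k * A j)
      = (G k * (∑ j, α j / A j - α k / A k) - α k * (∑ j, G j / A j - G k / A k)) / A k := by
  have hterm : ∀ j, (G k * α j - G j * α k) / (A k * A j)
      = (G k * (α j / A j) - α k * (G j / A j)) / A k := fun j => by ring
  rw [sum_congr rfl fun j _ => hterm j, ← sum_div, sum_sub_distrib, ← mul_sum, ← mul_sum,
    sum_erase_eq_sub (mem_univ k), sum_erase_eq_sub (mem_univ k)]

end

theorem Fk_eq {N : ℕ} {α A G : Fin N → ℝ} {d : ℝ} {k : Fin N}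
    (hT : ∑ j, α j / A j ≠ 0) (hA : A k ≠ 0) :
    Fk α A G d k = G k / A k - α k * d - Amix α A * (∑ j, G j / A j - d) * (α k / A k) := by
  rw [Fk, sum_erase_cross_div, Amix]
  field_simp
  ring

theorem Fk_unique_general (N : ℕ) (α A G : Fin N → ℝ) (d : ℝ)
    (hα : ∀ k, 0 < α k) (hsum : ∑ k, α k = 1) (hA : ∀ k, 0 < A k)
    (F' : Fin N → ℝ) (hF'sum : ∑ k, F' k = 0)
    (hF'eq : ∀ k l : Fin N,
      -(A k / α k) * F' k + G k / α k - A k * d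
        = -(A l / α l) * F' l + G l / α l - A l * d) :
    ∀ k, F' k = Fk α A G d k := by
  intro k
  have : Nonempty (Fin N) := ⟨k⟩
  have hT := sum_div_pos hα hA
  set c := pressureDeriv α A G d F' k
  have hF' : ∀ j, F' j = G j / A j - α j * d - c * (α j / A j) := fun j =>
    eq_of_pressureDeriv_eq (hα j).ne' (hA j).ne' (hF'eq j k)
  have hc : c = Amix α A * (∑ j, G j / A j - d) := by
    rw [Amix, eq_inv_mul_iff_mul_eq₀ hT.ne', mul_comm]
    exact (sum_div_sub_eq_of_exchange_eq hsum hF' hF'sum).symm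
  rw [hF' k, Fk_eq hT.ne' (hA k).ne', hc]

/-- Uniqueness: if exchange terms F'_k sum to zero and make all the phase
pressure derivatives −(A_k/α_k)F'_k + G_k/α_k − A_k d coincide, then they are
given by formula (2.24). -/
theorem Fk_unique (N : ℕ) (hN : 1 ≤ N) (α A G : Fin N → ℝ) (d : ℝ)
    (hα : ∀ k, 0 < α k) (hsum : ∑ k, α k = 1) (hA : ∀ k, 0 < A k)
    (F' : Fin N → ℝ) (hF'sum : ∑ k, F' k = 0)
    (hF'eq : ∀ k l : Fin N,
      -(A k / α k) * F' k + G k / α k - A k * d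
        = -(A l / α l) * F' l + G l / α l - A l * d) :
    ∀ k, F' k = Fk α A G d k :=
  Fk_unique_general N α A G d hα hsum hA F' hF'sum hF'eq
end
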